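/- Let q be a real quadratic form on ℝ^{n+1} with positive inertia index i⁺(q) ≥ 1. Then the open subset {[x] ∈ ℝPⁿ : q(x) > 0} of ℝPⁿ is homotopy equivalent to the real projective space ℝP^{i⁺(q)−1}; if i⁺(q) = 0 this subset is empty. -/

import Mathlib

/-!
Let `P` be a subspace of maximal dimension `i⁺(q)` on which `q` is positive definite. Its
`q`-orthogonal complement `N` is a complement of `P` on which `q ≤ 0` (a vector of `N` with
`q > 0` would enlarge `P`), so for `v = p + n` the straight-line deformation `p + s • n`,
`s` going from `1` to `0`, never decreases `q (p + s • n) = q p + s² q n`. It therefore stays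
inside `{q > 0}` and deforms that set in `ℙ(V)` onto `ℙ(P) ≅ ℝP^{i⁺(q) - 1}`.
-/

/-- The quotient topology on a real projective space `ℙ(V)`. -/
instance (V : Type*) [AddCommGroup V] [Module ℝ V] [TopologicalSpace V] :
    TopologicalSpace (Projectivization ℝ V) :=
  inferInstanceAs (TopologicalSpace (Quotient (projectivizationSetoid ℝ V)))

/-- The positive inertia index of a real quadratic form: the maximal dimension of a
subspace on which it is positive definite. -/
noncomputable def posInertia {n : ℕ} (q : QuadraticForm ℝ (Fin n → ℝ)) : ℕ :=
  sSup {d : ℕ | ∃ W : Submodule ℝ (Fin n → ℝ),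
    Module.finrank ℝ W = d ∧ ∀ x ∈ W, x ≠ 0 → 0 < q x}

open Module Topology
open scoped LinearAlgebra.Projectivization

namespace Projectivization

section Algebra

variable {K V W : Type*} [DivisionRing K] [AddCommGroup V] [Module K V] [AddCommGroup W]
  [Module K W]

theorem apply_rep_mk_ne_zero_iff (f : V →ₗ[K] W) {v : V} (hv : v ≠ 0) :
    f (mk K v hv).rep ≠ 0 ↔ f v ≠ 0 := by
  obtain ⟨a, ha⟩ := exists_smul_eq_mk_rep K v hv
  rw [← ha, Units.smul_def, map_smul, smul_ne_zero_iff_right (Units.ne_zero a)]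

theorem mk_apply_rep (f : V →ₗ[K] W) {x : ℙ K V} {v : V} (hv : v ≠ 0) (hx : x = mk K v hv)
    (h : f x.rep ≠ 0) :
    mk K (f x.rep) h = mk K (f v) ((apply_rep_mk_ne_zero_iff f hv).1 (hx ▸ h)) := by
  subst hx
  obtain ⟨a, ha⟩ := exists_smul_eq_mk_rep K v hv
  refine (mk_eq_mk_iff K _ _ _ _).2 ⟨a, ?_⟩
  rw [← ha, Units.smul_def, Units.smul_def, map_smul]

end Algebra

section Topology

section General

variable {V W : Type*} [AddCommGroup V] [Module ℝ V] [TopologicalSpace V] [AddCommGroup W]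
  [Module ℝ W] [TopologicalSpace W]

theorem isQuotientMap_mk' : IsQuotientMap (mk' ℝ : {v : V // v ≠ 0} → ℙ ℝ V) :=
  isQuotientMap_quotient_mk'

theorem continuous_prod_mk_apply_rep {Z : Type*} [TopologicalSpace Z] [LocallyCompactSpace Z]
    {S : Set (ℙ ℝ V)} (hS : IsOpen S) (L : Z → V →ₗ[ℝ] W)
    (hL : Continuous fun p : Z × V => L p.1 p.2) (hne : ∀ z, ∀ x ∈ S, L z x.rep ≠ 0) :
    Continuous fun p : Z × S => mk ℝ (L p.1 p.2.1.rep) (hne p.1 _ p.2.2) := by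
  -- `Z` is locally compact, so `id × (mk' restricted to the cone over S)` is still a quotient map.
  refine (isQuotientMap_mk'.restrictPreimage_isOpen hS).continuous_lift_prod_right ?_
  have hlift : ∀ p : Z × (mk' ℝ ⁻¹' S), L p.1 p.2.1.1 ≠ 0 := fun p =>
    (apply_rep_mk_ne_zero_iff (L p.1) p.2.1.2).1 (hne p.1 _ p.2.2)
  convert isQuotientMap_mk'.continuous.comp
    ((hL.comp (continuous_fst.prodMk
      (continuous_subtype_val.comp (continuous_subtype_val.comp continuous_snd)))).subtype_mk hlift)
    using 2 with p
  exact mk_apply_rep (L p.1) p.2.1.2 rfl _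

end General

variable {V W : Type*} [NormedAddCommGroup V] [NormedSpace ℝ V] [FiniteDimensional ℝ V]
  [NormedAddCommGroup W] [NormedSpace ℝ W]

theorem continuous_map (f : V →ₗ[ℝ] W) (hf : Function.Injective f) :
    Continuous (map f hf) :=
  isQuotientMap_mk'.continuous_iff.2 <| isQuotientMap_mk'.continuous.comp <|
    (f.continuous_of_finiteDimensional.comp continuous_subtype_val).subtype_mk _

noncomputable def mapHomeomorph [FiniteDimensional ℝ W] (e : V ≃ₗ[ℝ] W) : ℙ ℝ V ≃ₜ ℙ ℝ W where
  toFun := map (e : V →ₗ[ℝ] W) e.injective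
  invFun := map (e.symm : W →ₗ[ℝ] V) e.symm.injective
  left_inv := by
    intro x
    induction x using ind
    simp [map_mk]
  right_inv := by
    intro x
    induction x using ind
    simp [map_mk]
  continuous_toFun := continuous_map _ _
  continuous_invFun := continuous_map _ _

theorem continuous_mk_apply_rep {S : Set (ℙ ℝ V)} (hS : IsOpen S) (f : V →ₗ[ℝ] W)
    (hne : ∀ x ∈ S, f x.rep ≠ 0) : Continuous fun x : S => mk ℝ (f x.1.rep) (hne _ x.2) :=
  (continuous_prod_mk_apply_rep hS (fun _ : Unit => f)
    (f.continuous_of_finiteDimensional.comp continuous_snd) fun _ => hne).comp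
    ((continuous_const (y := ())).prodMk continuous_id)

end Topology

end Projectivization

namespace QuadraticMap

open Projectivization unitInterval

section Algebra

variable {V : Type*} [AddCommGroup V] [Module ℝ V] (q : QuadraticForm ℝ V)

theorem pos_rep_mk_iff {v : V} (hv : v ≠ 0) :
    0 < q (Projectivization.mk ℝ v hv).rep ↔ 0 < q v := by
  obtain ⟨a, ha⟩ := exists_smul_eq_mk_rep ℝ v hv
  rw [← ha, Units.smul_def, QuadraticMap.map_smul, smul_eq_mul,
    mul_pos_iff_of_pos_left (mul_self_pos.2 a.ne_zero)]

theorem ne_zero_of_pos {v : V} (hv : 0 < q v) : v ≠ 0 := by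
  rintro rfl
  simp at hv

theorem map_add_smul_of_polar_eq_zero {p n : V} (h : polar q p n = 0) (s : ℝ) :
    q (p + s • n) = q p + s ^ 2 * q n := by
  rw [QuadraticMap.map_add (⇑q), polar_smul_right, h, smul_zero, add_zero,
    QuadraticMap.map_smul, smul_eq_mul, pow_two]

structure IsInertiaSplitting (P N : Submodule ℝ V) : Prop where
  isCompl : IsCompl P N
  polar_eq_zero : ∀ p ∈ P, ∀ n ∈ N, polar q p n = 0
  pos : ∀ p ∈ P, p ≠ 0 → 0 < q p
  nonpos : ∀ n ∈ N, q n ≤ 0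

variable {q}

namespace IsInertiaSplitting

variable {P N : Submodule ℝ V}

theorem map_le_map_add_smul (h : q.IsInertiaSplitting P N) {p n : V} (hp : p ∈ P)
    (hn : n ∈ N) {s : ℝ} (hs₀ : 0 ≤ s) (hs₁ : s ≤ 1) : q (p + n) ≤ q (p + s • n) := by
  have h₁ := q.map_add_smul_of_polar_eq_zero (h.polar_eq_zero p hp n hn) 1
  rw [one_smul, one_pow, one_mul] at h₁
  rw [h₁, q.map_add_smul_of_polar_eq_zero (h.polar_eq_zero p hp n hn) s]
  have hs : s ^ 2 ≤ 1 := by nlinarith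
  nlinarith [mul_le_mul_of_nonpos_right hs (h.nonpos n hn)]

theorem map_le_map_projection_add_smul (h : q.IsInertiaSplitting P N) (v : V) {s : ℝ}
    (hs₀ : 0 ≤ s) (hs₁ : s ≤ 1) :
    q v ≤ q (P.projection N h.isCompl v + s • N.projection P h.isCompl.symm v) := by
  simpa only [Submodule.projection_add_projection_eq_self] using
    h.map_le_map_add_smul (Submodule.projection_apply_mem h.isCompl v)
      (Submodule.projection_apply_mem h.isCompl.symm v) hs₀ hs₁

theorem projectionOnto_ne_zero (h : q.IsInertiaSplitting P N) {v : V} (hv : 0 < q v) :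
    P.projectionOnto N h.isCompl v ≠ 0 := by
  intro h0
  have := h.map_le_map_projection_add_smul v le_rfl zero_le_one
  rw [zero_smul, add_zero, ← Submodule.coe_projectionOnto_apply, h0, Submodule.coe_zero,
    QuadraticMap.map_zero] at this
  linarith

theorem map_subtype_mem (h : q.IsInertiaSplitting P N) (y : ℙ ℝ P) :
    map P.subtype P.injective_subtype y ∈ {x : ℙ ℝ V | 0 < q x.rep} := by
  induction y using ind with
  | h u hu =>
    rw [Set.mem_ofPred_eq, map_mk, pos_rep_mk_iff]
    exact h.pos u u.2 (by simpa using hu)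

noncomputable def deformation (h : q.IsInertiaSplitting P N) (t : I) : V →ₗ[ℝ] V :=
  P.projection N h.isCompl + (σ t : ℝ) • N.projection P h.isCompl.symm

theorem deformation_zero (h : q.IsInertiaSplitting P N) : h.deformation 0 = LinearMap.id := by
  ext v
  simp [deformation, Submodule.projection_add_projection_eq_self]

theorem deformation_one (h : q.IsInertiaSplitting P N) :
    h.deformation 1 = P.projection N h.isCompl := by
  ext v
  simp [deformation]

theorem pos_deformation_apply (h : q.IsInertiaSplitting P N) (t : I) {v : V} (hv : 0 < q v) :
    0 < q (h.deformation t v) :=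
  hv.trans_le (h.map_le_map_projection_add_smul v (σ t).2.1 (σ t).2.2)

end IsInertiaSplitting

theorem pos_of_mem_sup_span_singleton {P : Submodule ℝ V} (hP : ∀ p ∈ P, p ≠ 0 → 0 < q p)
    {n : V} (hn : ∀ p ∈ P, polar q p n = 0) (hqn : 0 < q n) :
    ∀ x ∈ P ⊔ ℝ ∙ n, x ≠ 0 → 0 < q x := by
  intro x hx hx0
  obtain ⟨p, hp, _, hc, rfl⟩ := Submodule.mem_sup.1 hx
  obtain ⟨c, rfl⟩ := Submodule.mem_span_singleton.1 hc
  rw [q.map_add_smul_of_polar_eq_zero (hn p hp)]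
  rcases eq_or_ne p 0 with rfl | hp0
  · have hc0 : c ≠ 0 := by rintro rfl; simp at hx0
    simpa using mul_pos (pow_pos (abs_pos.2 hc0) 2) hqn
  · exact add_pos_of_pos_of_nonneg (hP p hp hp0) (by positivity)

variable [FiniteDimensional ℝ V]

theorem isInertiaSplitting_orthogonal {P : Submodule ℝ V} (hP : ∀ p ∈ P, p ≠ 0 → 0 < q p)
    (hmax : ∀ W : Submodule ℝ V, (∀ w ∈ W, w ≠ 0 → 0 < q w) → finrank ℝ W ≤ finrank ℝ P) :
    q.IsInertiaSplitting P (LinearMap.BilinForm.orthogonal (polarBilin q) P) where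
  isCompl := by
    refine (LinearMap.BilinForm.isCompl_orthogonal_iff_disjoint fun x y h => ?_).2 ?_
    · rwa [polarBilin_apply_apply, polar_comm, ← polarBilin_apply_apply]
    · refine Submodule.disjoint_def.2 fun p hp hp' => ?_
      by_contra hp0
      have h₂ : polar q p p = 0 := hp' p hp
      rw [polar_self, two_nsmul] at h₂
      linarith [hP p hp hp0]
  polar_eq_zero p hp n hn := hn p hp
  pos := hP
  nonpos n hn := by
    by_contra! hqn
    have hnP : n ∉ P := fun hnP => by
      have h₂ : polar q n n = 0 := hn n hnP
      rw [polar_self, two_nsmul] at h₂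
      linarith
    have hlt : P < P ⊔ ℝ ∙ n :=
      lt_of_le_of_ne le_sup_left fun h => hnP (h ▸ Submodule.mem_sup_right
        (Submodule.mem_span_singleton_self n))
    exact (Submodule.finrank_lt_finrank_of_lt hlt).not_ge
      (hmax _ (pos_of_mem_sup_span_singleton hP hn hqn))

end Algebra

section Topology

variable {V : Type*} [NormedAddCommGroup V] [NormedSpace ℝ V] [FiniteDimensional ℝ V]

theorem continuous_of_finiteDimensional (q : QuadraticForm ℝ V) : Continuous q := by
  have : Continuous fun x => LinearMap.toContinuousLinearMap (associated q x) :=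
    (LinearMap.toContinuousLinearMap.toLinearMap ∘ₗ associated q).continuous_of_finiteDimensional
  simpa [associated_eq_self_apply] using this.clm_apply continuous_id

theorem isOpen_setOf_pos_rep (q : QuadraticForm ℝ V) : IsOpen {x : ℙ ℝ V | 0 < q x.rep} := by
  rw [← isQuotientMap_mk'.isOpen_preimage]
  have : mk' ℝ ⁻¹' {x : ℙ ℝ V | 0 < q x.rep} = {v | 0 < q v.1} := by
    ext v
    exact q.pos_rep_mk_iff v.2
  rw [this]
  exact isOpen_Ioi.preimage (q.continuous_of_finiteDimensional.comp continuous_subtype_val)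

namespace IsInertiaSplitting

variable {q : QuadraticForm ℝ V} {P N : Submodule ℝ V}

noncomputable def inclusion (h : q.IsInertiaSplitting P N) :
    C(ℙ ℝ P, {x : ℙ ℝ V | 0 < q x.rep}) :=
  ⟨fun y => ⟨_, h.map_subtype_mem y⟩, (continuous_map _ _).subtype_mk _⟩

noncomputable def retraction (h : q.IsInertiaSplitting P N) :
    C({x : ℙ ℝ V | 0 < q x.rep}, ℙ ℝ P) :=
  ⟨_, continuous_mk_apply_rep (isOpen_setOf_pos_rep q) (P.projectionOnto N h.isCompl)
    fun _ hx => h.projectionOnto_ne_zero hx⟩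

theorem retraction_comp_inclusion (h : q.IsInertiaSplitting P N) :
    h.retraction.comp h.inclusion = ContinuousMap.id _ := by
  ext1 y
  induction y using ind with
  | h u hu =>
    simp only [ContinuousMap.comp_apply, ContinuousMap.id_apply, retraction, inclusion,
      ContinuousMap.coe_mk]
    rw [mk_apply_rep _ _ (map_mk _ _ _ _)]
    simp only [Submodule.subtype_apply, Submodule.projectionOnto_apply_left]

theorem continuous_deformation (h : q.IsInertiaSplitting P N) :
    Continuous fun p : I × V => h.deformation p.1 p.2 := by
  simp only [deformation, LinearMap.add_apply, LinearMap.smul_apply]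
  fun_prop

noncomputable def homotopy (h : q.IsInertiaSplitting P N) :
    ContinuousMap.Homotopy (ContinuousMap.id _) (h.inclusion.comp h.retraction) where
  toFun p := ⟨Projectivization.mk ℝ (h.deformation p.1 p.2.1.rep)
    (q.ne_zero_of_pos (h.pos_deformation_apply p.1 p.2.2)),
    (q.pos_rep_mk_iff _).2 (h.pos_deformation_apply p.1 p.2.2)⟩
  continuous_toFun :=
    (continuous_prod_mk_apply_rep (isOpen_setOf_pos_rep q) h.deformation h.continuous_deformation
      fun t _ hx => q.ne_zero_of_pos (h.pos_deformation_apply t hx)).subtype_mk _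
  map_zero_left x := by
    ext1
    simp only [h.deformation_zero, LinearMap.id_apply, mk_rep, ContinuousMap.id_apply]
  map_one_left x := by
    ext1
    simp only [h.deformation_one, ContinuousMap.comp_apply, inclusion, retraction,
      ContinuousMap.coe_mk, map_mk]
    rfl

noncomputable def homotopyEquiv (h : q.IsInertiaSplitting P N) :
    ContinuousMap.HomotopyEquiv {x : ℙ ℝ V | 0 < q x.rep} (ℙ ℝ P) where
  toFun := h.retraction
  invFun := h.inclusion
  left_inv := ⟨h.homotopy.symm⟩
  right_inv := by
    rw [h.retraction_comp_inclusion]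

end IsInertiaSplitting

end Topology

end QuadraticMap

theorem exists_finrank_eq_posInertia {n : ℕ} (q : QuadraticForm ℝ (Fin n → ℝ)) :
    ∃ P : Submodule ℝ (Fin n → ℝ), finrank ℝ P = posInertia q ∧ (∀ p ∈ P, p ≠ 0 → 0 < q p) ∧
      ∀ W : Submodule ℝ (Fin n → ℝ), (∀ w ∈ W, w ≠ 0 → 0 < q w) → finrank ℝ W ≤ finrank ℝ P := by
  set D := {d : ℕ | ∃ W : Submodule ℝ (Fin n → ℝ), finrank ℝ W = d ∧ ∀ x ∈ W, x ≠ 0 → 0 < q x}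
  have hD : D.Nonempty := ⟨0, ⊥, finrank_bot ℝ _, by simp⟩
  have hbdd : BddAbove D := ⟨n, by rintro _ ⟨W, rfl, -⟩; simpa using W.finrank_le⟩
  obtain ⟨P, hP, hpos⟩ := Nat.sSup_mem hD hbdd
  exact ⟨P, hP, hpos, fun W hW => hP ▸ le_csSup hbdd ⟨W, rfl, hW⟩⟩

/-- For a real quadratic form `q` on `ℝ^{n+1}` with `i⁺(q) ≥ 1`, the open set
`{[x] ∈ ℝPⁿ : q(x) > 0}` is homotopy equivalent to `ℝP^{i⁺(q)−1}` (realized as the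
projectivization of `ℝ^{i⁺(q)}`); if `i⁺(q) = 0` this set is empty. -/
theorem positivity_set_homotopy_type (n : ℕ) (q : QuadraticForm ℝ (Fin (n + 1) → ℝ)) :
    (1 ≤ posInertia q →
      Nonempty (ContinuousMap.HomotopyEquiv
        {P : Projectivization ℝ (Fin (n + 1) → ℝ) | 0 < q P.rep}
        (Projectivization ℝ (Fin (posInertia q) → ℝ)))) ∧
    (posInertia q = 0 →
      {P : Projectivization ℝ (Fin (n + 1) → ℝ) | 0 < q P.rep} = ∅) := by
  obtain ⟨P, hrank, hpos, hmax⟩ := exists_finrank_eq_posInertia q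
  have h := QuadraticMap.isInertiaSplitting_orthogonal hpos hmax
  refine ⟨fun _ => ?_, fun h0 => ?_⟩
  · rw [← hrank]
    exact ⟨h.homotopyEquiv.trans
      (Projectivization.mapHomeomorph (Module.finBasis ℝ P).equivFun).toHomotopyEquiv⟩
  · have : Subsingleton P := Module.finrank_zero_iff.1 (hrank.trans h0)
    exact Set.eq_empty_of_forall_notMem fun x hx =>
      (h.retraction ⟨x, hx⟩).rep_nonzero (Subsingleton.elim _ _)
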